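/- arXiv:2506.02652 — 8 statements merged into one kernel-verified Lean document; each statement's English description precedes it below -/
import Mathlib

section
/- Let G be a finite connected simple graph of order n with rad(G) = diam(G). Then every vertex of G is a boundary vertex, i.e., ∂(G) = V(G), so the boundary number κ(G) equals n. -/
open SimpleGraph

def gBoundary {V : Type*} (G : SimpleGraph V) : Set V :=
  {v | ∃ u, ∀ w, G.Adj v w → G.dist u w ≤ G.dist u v}

noncomputable def gEcc {V : Type*} [Fintype V] (G : SimpleGraph V) (v : V) : ℕ :=
  Finset.univ.sup fun w => G.dist v w

noncomputable def gDiam {V : Type*} [Fintype V] (G : SimpleGraph V) : ℕ :=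
  Finset.univ.sup fun v => gEcc G v

noncomputable def gRad {V : Type*} [Fintype V] (G : SimpleGraph V) : ℕ :=
  sInf (Set.range fun v => gEcc G v)

def IsBDM {V : Type*} (G : SimpleGraph V) : Prop :=
  ∀ G' : SimpleGraph V, G'.Connected → gBoundary G' = gBoundary G →
    (∀ x ∈ gBoundary G, ∀ y ∈ gBoundary G, G'.dist x y = G.dist x y) →
    Nonempty (G ≃g G')

def IsCutVertex {V : Type*} (G : SimpleGraph V) (v : V) : Prop :=
  ¬ (G.induce {u | u ≠ v}).Connected

def Chordal {V : Type*} (G : SimpleGraph V) : Prop :=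
  ∀ n, 4 ≤ n → IsEmpty (cycleGraph n ↪g G)

def DistHereditary {V : Type*} (G : SimpleGraph V) : Prop :=
  ∀ s : Set V, (G.induce s).Connected →
    ∀ u v : s, (G.induce s).dist u v = G.dist u v

def Ptolemaic {V : Type*} (G : SimpleGraph V) : Prop :=
  Chordal G ∧ DistHereditary G

def IsIntervalGraph {V : Type*} (G : SimpleGraph V) : Prop :=
  ∃ a b : V → ℝ, (∀ v, a v ≤ b v) ∧
    ∀ u v : V, u ≠ v →
      (G.Adj u v ↔ (Set.Icc (a u) (b u) ∩ Set.Icc (a v) (b v)).Nonempty)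

def IsBipartiteGraph {V : Type*} (G : SimpleGraph V) : Prop :=
  ∃ s : Set V, ∀ a b : V, G.Adj a b → ((a ∈ s ∧ b ∉ s) ∨ (a ∉ s ∧ b ∈ s))

def IsSplitGraph {V : Type*} (G : SimpleGraph V) : Prop :=
  ∃ K : Set V, (∀ a ∈ K, ∀ b ∈ K, a ≠ b → G.Adj a b) ∧
    (∀ a ∉ K, ∀ b ∉ K, ¬ G.Adj a b)

def IsFanCenter {V : Type*} (G : SimpleGraph V) (u : V) : Prop :=
  ∃ x : Fin 4 → V, Function.Injective x ∧ (∀ i, x i ≠ u) ∧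
    (∀ i, G.Adj u (x i)) ∧
    (∀ i j : Fin 4, G.Adj (x i) (x j) ↔ (i.val + 1 = j.val ∨ j.val + 1 = i.val))

theorem boundary_eq_univ_of_rad_eq_diam {V : Type*} [Fintype V] (G : SimpleGraph V)
    (hG : G.Connected) (h : gRad G = gDiam G) :
    gBoundary G = Set.univ ∧ (gBoundary G).ncard = Fintype.card V := by
  have hne : Nonempty V := hG.nonempty
  have hecc : ∀ v : V, gEcc G v = gDiam G := by
    intro v
    have h1 : gEcc G v ≤ gDiam G := Finset.le_sup (Finset.mem_univ v)
    have h2 : gRad G ≤ gEcc G v := Nat.sInf_le ⟨v, rfl⟩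
    omega
  have hb : gBoundary G = Set.univ := by
    ext v
    simp only [Set.mem_univ, iff_true]
    obtain ⟨u, -, hu⟩ := Finset.exists_mem_eq_sup Finset.univ Finset.univ_nonempty
      (fun w => G.dist v w)
    refine ⟨u, fun w hw => ?_⟩
    have h3 : G.dist u w ≤ gEcc G u := Finset.le_sup (Finset.mem_univ w)
    have h4 : G.dist u v = gEcc G v := by rw [G.dist_comm]; exact hu.symm
    rw [h4, hecc v, ← hecc u]
    exact h3
  refine ⟨hb, ?_⟩
  rw [hb, Set.ncard_univ, Nat.card_eq_fintype_card]
end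

section
/- Let G be a finite connected simple graph of order n with diam(G) = 2. Then n - 1 ≤ κ(G) ≤ n. Moreover, κ(G) = n - 1 if and only if G contains a unique central vertex (a unique vertex v with ecc(v) = rad(G)). -/
open SimpleGraph

section AuxBoundary

variable {V : Type*} [Fintype V] {G : SimpleGraph V}

lemma aux_dist_le_ecc (u w : V) : G.dist u w ≤ gEcc G u :=
  Finset.le_sup (Finset.mem_univ w)

lemma aux_ecc_le_diam (u : V) : gEcc G u ≤ gDiam G :=
  Finset.le_sup (Finset.mem_univ u)

lemma aux_exists_ecc [Nonempty V] (u : V) : ∃ w, G.dist u w = gEcc G u := by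
  obtain ⟨w, -, hw⟩ := Finset.exists_mem_eq_sup Finset.univ Finset.univ_nonempty
    (fun w => G.dist u w)
  exact ⟨w, hw.symm⟩

lemma aux_mem_boundary_of_ecc (h : gDiam G = 2) {v : V}
    (hv : gEcc G v = 2) : v ∈ gBoundary G := by
  have : Nonempty V := ⟨v⟩
  obtain ⟨x, hx⟩ := aux_exists_ecc (G := G) v
  refine ⟨x, fun w hw => ?_⟩
  rw [SimpleGraph.dist_comm (u := x) (v := v), hx, hv]
  calc G.dist x w ≤ gEcc G x := aux_dist_le_ecc x w
    _ ≤ gDiam G := aux_ecc_le_diam x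
    _ = 2 := h

end AuxBoundary

theorem boundary_card_of_diam_two {V : Type*} [Fintype V] (G : SimpleGraph V)
    (hG : G.Connected) (h : gDiam G = 2) :
    Fintype.card V - 1 ≤ (gBoundary G).ncard ∧ (gBoundary G).ncard ≤ Fintype.card V ∧
      ((gBoundary G).ncard = Fintype.card V - 1 ↔ ∃! v : V, gEcc G v = gRad G) := by
  classical
  have hne : Nonempty V := by
    by_contra hn
    rw [not_nonempty_iff] at hn
    rw [gDiam, Finset.univ_eq_empty, Finset.sup_empty] at h
    exact two_ne_zero h.symm
  have heccle : ∀ u : V, gEcc G u ≤ 2 := fun u => h ▸ aux_ecc_le_diam u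
  have hd2 : ∀ u w : V, G.dist u w ≤ 2 := fun u w =>
    le_trans (aux_dist_le_ecc u w) (heccle u)
  -- there is a vertex of eccentricity 2, hence two distinct vertices
  obtain ⟨v0, -, hv0⟩ := Finset.exists_mem_eq_sup (Finset.univ : Finset V)
    Finset.univ_nonempty (fun v => gEcc G v)
  have hv0' : gEcc G v0 = 2 := by rw [gDiam] at h; rw [← hv0]; exact h
  obtain ⟨w0, hw0⟩ := aux_exists_ecc (G := G) v0
  have hdvw : G.dist v0 w0 = 2 := by rw [hw0, hv0']
  have hvw : v0 ≠ w0 := by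
    intro e
    rw [e, SimpleGraph.dist_self] at hdvw
    exact two_ne_zero hdvw.symm
  have : Nontrivial V := ⟨v0, w0, hvw⟩
  have hcard : 2 ≤ Fintype.card V := Fintype.one_lt_card
  have hecc1 : ∀ u : V, 1 ≤ gEcc G u := by
    intro u
    obtain ⟨x, hx⟩ := exists_ne u
    calc 1 ≤ G.dist u x := Nat.one_le_iff_ne_zero.mpr
          (fun e => hx ((hG.dist_eq_zero_iff.mp e).symm))
      _ ≤ gEcc G u := aux_dist_le_ecc u x
  -- characterization of non-boundary vertices
  have hnb : ∀ v : V, v ∉ gBoundary G →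
      (∀ u, u ≠ v → G.dist v u = 1) ∧ (∀ u, u ≠ v → gEcc G u = 2) := by
    intro v hv
    simp only [gBoundary, Set.mem_setOf_eq] at hv
    push_neg at hv
    have hadj : ∀ u, u ≠ v → G.dist v u = 1 := by
      intro u hu
      by_contra hne1
      have h2 : G.dist v u = 2 := by
        have h1 := hd2 v u
        have h0 : G.dist v u ≠ 0 := fun e => hu ((hG.dist_eq_zero_iff.mp e).symm)
        omega
      obtain ⟨w, hw, hlt⟩ := hv u
      rw [SimpleGraph.dist_comm (u := u) (v := v), h2] at hlt
      exact absurd (hd2 u w) (by omega)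
    refine ⟨hadj, fun u hu => ?_⟩
    obtain ⟨w, hw, hlt⟩ := hv u
    have h1 : G.dist u v = 1 := by rw [SimpleGraph.dist_comm]; exact hadj u hu
    rw [h1] at hlt
    have h2 : G.dist u w = 2 := by have := hd2 u w; omega
    have h3 := aux_dist_le_ecc (G := G) u w
    have h4 := heccle u
    omega
  have hsub : (gBoundary G)ᶜ.Subsingleton := by
    intro v hv v' hv'
    by_contra hne
    have h2 := (hnb v hv).2 v' (Ne.symm hne)
    exact hv' (aux_mem_boundary_of_ecc h h2)
  have hcompl : (gBoundary G).ncard + (gBoundary G)ᶜ.ncard = Fintype.card V := by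
    rw [← Nat.card_eq_fintype_card]
    exact Set.ncard_add_ncard_compl _
  have hcle : (gBoundary G)ᶜ.ncard ≤ 1 := by
    rcases Set.eq_empty_or_nonempty ((gBoundary G)ᶜ) with he | ⟨x, hx⟩
    · simp [he]
    · rw [hsub.eq_singleton_of_mem hx, Set.ncard_singleton]
  refine ⟨by omega, by omega, ?_, ?_⟩
  · -- ncard = card - 1 → unique central vertex
    intro hk
    have hvex : ∃ v : V, v ∉ gBoundary G := by
      by_contra hc
      push_neg at hc
      have : (gBoundary G)ᶜ = ∅ := by
        ext x; simp [hc x]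
      rw [this, Set.ncard_empty] at hcompl
      omega
    obtain ⟨v, hv⟩ := hvex
    obtain ⟨hadj, hecc2⟩ := hnb v hv
    have heccv : gEcc G v = 1 := by
      have hle : gEcc G v ≤ 1 := by
        refine Finset.sup_le fun w _ => ?_
        rcases eq_or_ne w v with rfl | hw
        · simp [SimpleGraph.dist_self]
        · exact le_of_eq (hadj w hw)
      exact le_antisymm hle (hecc1 v)
    have hrad : gRad G = 1 := by
      refine le_antisymm (Nat.sInf_le ⟨v, heccv⟩) (le_csInf ⟨1, v, heccv⟩ ?_)
      rintro b ⟨u, rfl⟩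
      exact hecc1 u
    refine ⟨v, show gEcc G v = gRad G by rw [heccv, hrad], fun u hu => ?_⟩
    by_contra hne
    have := hecc2 u hne
    rw [hu, hrad] at this
    omega
  · -- unique central vertex → ncard = card - 1
    rintro ⟨v, hv, huniq⟩
    have hradle : ∀ u : V, gRad G ≤ gEcc G u := fun u => Nat.sInf_le ⟨u, rfl⟩
    have hrad1 : 1 ≤ gRad G := le_csInf ⟨gEcc G v, v, rfl⟩ (by rintro b ⟨u, rfl⟩; exact hecc1 u)
    have hrad : gRad G = 1 := by
      by_contra hr
      have hr2 : gRad G = 2 := by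
        have := le_trans (hradle v0) (heccle v0)
        omega
      have hall : ∀ u : V, gEcc G u = gRad G := fun u =>
        le_antisymm (hr2 ▸ heccle u) (hradle u)
      exact hvw ((huniq v0 (hall v0)).trans (huniq w0 (hall w0)).symm)
    have heccv : gEcc G v = 1 := by rw [hv, hrad]
    have hecc2 : ∀ u : V, u ≠ v → gEcc G u = 2 := by
      intro u hu
      have h1 : gEcc G u ≠ 1 := by
        intro e
        exact hu (huniq u (show gEcc G u = gRad G by rw [e, hrad]))
      have := heccle u
      have := hecc1 u
      omega
    have hvnb : v ∉ gBoundary G := by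
      rintro ⟨u, hu⟩
      rcases eq_or_ne u v with heq | hne
      · subst heq
        obtain ⟨w, hw⟩ := aux_exists_ecc (G := G) u
        rw [heccv] at hw
        have hadjw : G.Adj u w := SimpleGraph.dist_eq_one_iff_adj.mp hw
        have := hu w hadjw
        rw [SimpleGraph.dist_self, hw] at this
        omega
      · obtain ⟨w, hw⟩ := aux_exists_ecc (G := G) u
        rw [hecc2 u hne] at hw
        have hdvu : G.dist v u = 1 := by
          have hle := aux_dist_le_ecc (G := G) v u
          rw [heccv] at hle
          have h0 : G.dist v u ≠ 0 := fun e => hne (hG.dist_eq_zero_iff.mp e).symm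
          omega
        have hwv : w ≠ v := by
          intro e
          rw [e, SimpleGraph.dist_comm] at hw
          rw [hdvu] at hw
          omega
        have hdvw : G.dist v w = 1 := by
          have hle := aux_dist_le_ecc (G := G) v w
          rw [heccv] at hle
          have h0 : G.dist v w ≠ 0 := fun e => hwv (hG.dist_eq_zero_iff.mp e).symm
          omega
        have hadjvw : G.Adj v w := SimpleGraph.dist_eq_one_iff_adj.mp hdvw
        have := hu w hadjvw
        rw [hw, SimpleGraph.dist_comm (u := u) (v := v), hdvu] at this
        omega
    have hbd : ∀ u : V, u ≠ v → u ∈ gBoundary G := fun u hu =>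
      aux_mem_boundary_of_ecc h (hecc2 u hu)
    have hcompl' : (gBoundary G)ᶜ = {v} := by
      ext x
      simp only [Set.mem_compl_iff, Set.mem_singleton_iff]
      constructor
      · intro hx
        by_contra hxv
        exact hx (hbd x hxv)
      · rintro rfl; exact hvnb
    rw [hcompl', Set.ncard_singleton] at hcompl
    omega
end

section
/- Let G be a finite connected simple graph with diam(G) = 2. Then G is a BDM graph: for every connected simple graph G' on the same vertex set with ∂(G') = ∂(G) and d_{G'}(x,y) = d_G(x,y) for all x, y ∈ ∂(G), the graph G' is isomorphic to G. -/
open SimpleGraph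

lemma dist_le_gDiam {V : Type*} [Fintype V] (G : SimpleGraph V) (u v : V) :
    G.dist u v ≤ gDiam G :=
  le_trans (Finset.le_sup (f := fun w => G.dist u w) (Finset.mem_univ v))
    (Finset.le_sup (f := fun v => gEcc G v) (Finset.mem_univ u))

lemma interior_universal {V : Type*} (H : SimpleGraph V) (hH : H.Connected)
    (hdiam : ∀ x y : V, H.dist x y ≤ 2) {v : V} (hv : v ∉ gBoundary H)
    {u : V} (huv : u ≠ v) : H.Adj u v := by
  simp only [gBoundary, Set.mem_setOf_eq, not_exists, not_forall] at hv
  obtain ⟨w, hadj, hlt⟩ := hv u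
  push_neg at hlt
  have h1 : H.dist u v < 2 := lt_of_lt_of_le hlt (hdiam u w)
  have h2 : 0 < H.dist u v := hH.pos_dist_of_ne huv
  have : H.dist u v = 1 := by omega
  exact SimpleGraph.dist_eq_one_iff_adj.mp this

theorem bdm_of_diam_two {V : Type*} [Fintype V] (G : SimpleGraph V)
    (hG : G.Connected) (h : gDiam G = 2) : IsBDM G := by
  intro G' hG' hb hd
  have hne : (Finset.univ : Finset V).Nonempty := by
    by_contra hcon
    rw [Finset.not_nonempty_iff_eq_empty] at hcon
    simp [gDiam, hcon] at h
  have hdG : ∀ x y : V, G.dist x y ≤ 2 := by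
    intro x y; rw [← h]; exact dist_le_gDiam G x y
  -- diam of G' is attained at a pair of boundary vertices
  have hdG' : ∀ x y : V, G'.dist x y ≤ 2 := by
    obtain ⟨u, _, hu⟩ := Finset.exists_mem_eq_sup Finset.univ hne (fun v => gEcc G' v)
    obtain ⟨v, _, hv⟩ := Finset.exists_mem_eq_sup Finset.univ hne (fun w => G'.dist u w)
    have huv : G'.dist u v = gDiam G' := by
      have : gDiam G' = G'.dist u v := by rw [gDiam, hu, gEcc, hv]
      exact this.symm
    have huv' : G'.dist v u = gDiam G' := by rw [SimpleGraph.dist_comm]; exact huv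
    have hvB : v ∈ gBoundary G' := by
      refine ⟨u, fun w _ => ?_⟩
      rw [huv]
      exact le_trans (dist_le_gDiam G' u w) le_rfl
    have huB : u ∈ gBoundary G' := by
      refine ⟨v, fun w _ => ?_⟩
      rw [huv']
      exact dist_le_gDiam G' v w
    rw [hb] at hvB huB
    have : gDiam G' ≤ 2 := by
      rw [← huv, hd u huB v hvB]; exact hdG u v
    intro x y; exact le_trans (dist_le_gDiam G' x y) this
  have hGG' : G = G' := by
    ext u v
    constructor
    · intro hadj
      by_cases hu : u ∈ gBoundary G
      · by_cases hv : v ∈ gBoundary G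
        · have : G.dist u v = 1 := SimpleGraph.dist_eq_one_iff_adj.mpr hadj
          exact SimpleGraph.dist_eq_one_iff_adj.mp (by rw [hd u hu v hv, this])
        · rw [← hb] at hv
          exact interior_universal G' hG' hdG' hv hadj.ne
      · rw [← hb] at hu
        exact (interior_universal G' hG' hdG' hu hadj.ne.symm).symm
    · intro hadj
      by_cases hu : u ∈ gBoundary G
      · by_cases hv : v ∈ gBoundary G
        · have : G'.dist u v = 1 := SimpleGraph.dist_eq_one_iff_adj.mpr hadj
          rw [hd u hu v hv] at this
          exact SimpleGraph.dist_eq_one_iff_adj.mp this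
        · exact interior_universal G hG hdG hv hadj.ne
      · exact (interior_universal G hG hdG hu hadj.ne.symm).symm
  subst hGG'
  exact ⟨SimpleGraph.Iso.refl⟩
end

section
/- Let G be a finite connected simple graph of order n whose boundary ∂(G) consists of all vertices except a single vertex v (i.e., ∂(G) = V(G) \ {v}). Then either G is a BDM graph, or there exists a neighbor h of v such that the edge e = vh is v-irrelevant, meaning that in the graph G - e obtained by deleting e, every vertex z in the G-neighborhood of v satisfies d_{G-e}(h, z) ≤ 2. -/
open SimpleGraph

private lemma walk_two_cases {V : Type*} {H : SimpleGraph V} {h z : V} (p : H.Walk h z)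
    (hl : p.length ≤ 2) : h = z ∨ H.Adj h z ∨ ∃ x, H.Adj h x ∧ H.Adj x z := by
  cases p with
  | nil => exact Or.inl rfl
  | cons a q =>
    cases q with
    | nil => exact Or.inr (Or.inl a)
    | cons b r =>
      cases r with
      | nil => exact Or.inr (Or.inr ⟨_, a, b⟩)
      | cons c s => simp [SimpleGraph.Walk.length_cons] at hl

theorem bdm_or_exists_irrelevant_edge {V : Type*} [Fintype V] (G : SimpleGraph V)
    (hG : G.Connected) (v : V) (hb : gBoundary G = Set.univ \ {v}) :
    IsBDM G ∨ ∃ h : V, G.Adj v h ∧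
      ∀ z : V, G.Adj v z → (G.deleteEdges {s(v, h)}).dist h z ≤ 2 := by
  by_cases hirr : ∃ h : V, G.Adj v h ∧
      ∀ z : V, G.Adj v z → (G.deleteEdges {s(v, h)}).dist h z ≤ 2
  · exact Or.inr hirr
  left
  intro G' hG' _hbd hdist
  have hmem : ∀ x : V, x ≠ v → x ∈ gBoundary G := by
    intro x hx; rw [hb]; exact ⟨Set.mem_univ x, hx⟩
  have hd : ∀ x y : V, x ≠ v → y ≠ v → G'.dist x y = G.dist x y := fun x y hx hy =>
    hdist x (hmem x hx) y (hmem y hy)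
  have hadj : ∀ x y : V, x ≠ v → y ≠ v → (G'.Adj x y ↔ G.Adj x y) := by
    intro x y hx hy
    rw [← SimpleGraph.dist_eq_one_iff_adj, ← SimpleGraph.dist_eq_one_iff_adj, hd x y hx hy]
  -- N_G(v) ⊆ N_{G'}(v)
  have hAA' : ∀ h : V, G.Adj v h → G'.Adj v h := by
    by_contra hc
    push_neg at hc
    obtain ⟨h, hvh, hvh'⟩ := hc
    refine hirr ⟨h, hvh, ?_⟩
    intro z hvz
    have hhne : h ≠ v := hvh.ne'
    have hzne : z ≠ v := hvz.ne'
    by_cases hzh : z = h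
    · subst hzh; simp [SimpleGraph.dist_self]
    have h2 : G'.dist h z ≤ 2 := by
      rw [hd h z hhne hzne]
      refine le_trans (SimpleGraph.dist_le
        (SimpleGraph.Walk.cons hvh.symm (SimpleGraph.Walk.cons hvz SimpleGraph.Walk.nil))) ?_
      simp
    obtain ⟨p, hp⟩ := (hG' h z).exists_walk_length_eq_dist
    rcases walk_two_cases p (by omega) with heq | hadj' | ⟨x, ha, hb2⟩
    · exact absurd heq (Ne.symm hzh)
    · have hGadj : G.Adj h z := (hadj h z hhne hzne).mp hadj'
      have e1 : (G.deleteEdges {s(v, h)}).Adj h z := by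
        rw [SimpleGraph.deleteEdges_adj]
        refine ⟨hGadj, ?_⟩
        simp only [Set.mem_singleton_iff, Sym2.eq_iff]
        rintro (⟨h1, -⟩ | ⟨-, h2⟩)
        · exact hhne h1
        · exact hzne h2
      calc (G.deleteEdges {s(v, h)}).dist h z ≤ e1.toWalk.length := SimpleGraph.dist_le _
        _ ≤ 2 := by simp
    · have hxv : x ≠ v := by
        intro hxv; subst hxv; exact hvh' ha.symm
      have ha' : G.Adj h x := (hadj h x hhne hxv).mp ha
      have hb' : G.Adj x z := (hadj x z hxv hzne).mp hb2
      have e1 : (G.deleteEdges {s(v, h)}).Adj h x := by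
        rw [SimpleGraph.deleteEdges_adj]
        refine ⟨ha', ?_⟩
        simp only [Set.mem_singleton_iff, Sym2.eq_iff]
        rintro (⟨h1, -⟩ | ⟨-, h2⟩)
        · exact hhne h1
        · exact hxv h2
      have e2 : (G.deleteEdges {s(v, h)}).Adj x z := by
        rw [SimpleGraph.deleteEdges_adj]
        refine ⟨hb', ?_⟩
        simp only [Set.mem_singleton_iff, Sym2.eq_iff]
        rintro (⟨h1, -⟩ | ⟨-, h2⟩)
        · exact hxv h1
        · exact hzne h2
      refine le_trans (SimpleGraph.dist_le
        (SimpleGraph.Walk.cons e1 (SimpleGraph.Walk.cons e2 SimpleGraph.Walk.nil))) ?_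
      simp
  -- N_{G'}(v) ⊆ N_G(v)
  have hA'A : ∀ h : V, G'.Adj v h → G.Adj v h := by
    intro h hvh'
    by_contra hvh
    have hhne : h ≠ v := hvh'.ne'
    have hvnb : v ∉ gBoundary G := by rw [hb]; simp
    have hne : ¬ ∀ w, G.Adj v w → G.dist h w ≤ G.dist h v := fun hc => hvnb ⟨h, hc⟩
    push_neg at hne
    obtain ⟨w, hvw, hw⟩ := hne
    have hwne : w ≠ v := hvw.ne'
    have hdvh : 2 ≤ G.dist h v := by
      have h0 : G.dist h v ≠ 0 := fun hc => hhne (hG.dist_eq_zero_iff.mp hc)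
      have h1 : G.dist h v ≠ 1 := by
        intro hc
        exact hvh ((SimpleGraph.dist_eq_one_iff_adj.mp hc).symm)
      omega
    have hle : G'.dist h w ≤ 2 := by
      refine le_trans (SimpleGraph.dist_le
        (SimpleGraph.Walk.cons hvh'.symm (SimpleGraph.Walk.cons (hAA' w hvw)
          SimpleGraph.Walk.nil))) ?_
      simp
    rw [hd h w hhne hwne] at hle
    omega
  have hGG' : G = G' := by
    ext a b
    by_cases ha : a = v
    · subst ha; exact ⟨hAA' b, hA'A b⟩
    by_cases hbv : b = v
    · subst hbv
      exact ⟨fun hab => (hAA' a hab.symm).symm, fun hab => (hA'A a hab.symm).symm⟩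
    · exact (hadj a b ha hbv).symm
  rw [← hGG']
  exact ⟨SimpleGraph.Iso.refl⟩
end

section
/- Every finite connected Ptolemaic graph G is a BDM graph: for every connected graph G' on the same vertex set with ∂(G') = ∂(G) and d_{G'}(x,y) = d_G(x,y) for all x, y ∈ ∂(G), the graph G' is isomorphic to G. -/
open SimpleGraph

/-!
A vertex `v` of a Ptolemaic graph that is not a cut vertex is a boundary vertex: by
`C₄`-freeness and distance-heredity, a neighbour `u` of `v` whose closed neighbourhood meets
`N(v)` maximally is adjacent to all other neighbours of `v`, so `v` is a boundary vertex of `u`.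
For a cut vertex `v`, the vertices farthest from `v` in two components of `G - v` are boundary
vertices `x`, `y` such that every vertex reaches `x` or `y` by a geodesic through `v`.
Now let `G'` have the same boundary and boundary distances. A vertex `w` at distance `d(x, v)`
from `x` on an `x`–`y` geodesic of `G'` is at least as far as `v` from every boundary vertex,
and extending geodesics of `G'` to the boundary turns this into equality. Since, by the same
extension argument, boundary distance vectors determine all distances, `v ↦ w` is an isometry
from `G` onto `G'`, hence an isomorphism.
-/

section

variable {V : Type*} {G G' : SimpleGraph V} {a b c d u v w x : V}

lemma SimpleGraph.exists_adj_adj_of_dist_eq_two (h : G.dist a b = 2) :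
    ∃ m, G.Adj a m ∧ G.Adj m b := by
  have hr : G.Reachable a b := Reachable.of_dist_ne_zero (by omega)
  obtain ⟨-, -, m, hm⟩ := edist_eq_two_iff.mp (by rw [← hr.coe_dist_eq_edist, h]; rfl)
  exact ⟨m, hm.1, hm.2.symm⟩

lemma SimpleGraph.dist_le_two_of_adj_adj (ha : G.Adj a v) (hb : G.Adj v b) : G.dist a b ≤ 2 :=
  G.dist_le (.cons ha (.cons hb .nil))

lemma SimpleGraph.Connected.exists_dist_eq_of_le_dist (hG : G.Connected) {j : ℕ}
    (hj : j ≤ G.dist a b) : ∃ w, G.dist a w = j ∧ G.dist w b = G.dist a b - j := by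
  obtain ⟨p, hp⟩ := hG.exists_walk_length_eq_dist a b
  have h₁ := G.dist_le (p.take j)
  have h₂ := G.dist_le (p.drop j)
  have h₃ := hG.dist_triangle (u := a) (v := p.getVert j) (w := b)
  simp only [Walk.take_length, Walk.drop_length] at h₁ h₂
  exact ⟨p.getVert j, by omega, by omega⟩

lemma exists_mem_gBoundary_dist_eq_add [Finite V] (hG : G.Connected) (u v : V) :
    ∃ b ∈ gBoundary G, G.dist u b = G.dist u v + G.dist v b := by
  obtain ⟨b, hb, hmax⟩ := Set.exists_max_image {z | G.dist u z = G.dist u v + G.dist v z}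
    (fun z => G.dist u z) (Set.toFinite _) ⟨v, by simp⟩
  refine ⟨b, ⟨u, fun w hbw => ?_⟩, hb⟩
  by_contra! hlt
  have h₁ := hG.dist_triangle (u := u) (v := b) (w := w)
  have h₂ := hG.dist_triangle (u := u) (v := v) (w := w)
  have h₃ := hG.dist_triangle (u := v) (v := b) (w := w)
  have hbw' := dist_eq_one_iff_adj.mpr hbw
  have := hmax w (show _ = _ by simp only [Set.mem_ofPred_eq] at hb; omega)
  omega

lemma Chordal.adj_or_adj (hC : Chordal G) (hab : G.Adj a b) (hbc : G.Adj b c) (hcd : G.Adj c d)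
    (hda : G.Adj d a) (hac : a ≠ c) (hbd : b ≠ d) : G.Adj a c ∨ G.Adj b d := by
  by_contra! h
  have hinj : Function.Injective ![a, b, c, d] := by
    intro i j hij
    fin_cases i <;> fin_cases j <;>
      simp_all [hab.ne, hbc.ne, hcd.ne, hda.ne, hab.ne', hbc.ne', hcd.ne', hda.ne']
  refine (hC 4 le_rfl).false ⟨⟨![a, b, c, d], hinj⟩, fun {i j} => ?_⟩
  fin_cases i <;> fin_cases j <;>
    simp [cycleGraph_adj, hab, hbc, hcd, hda, hab.symm, hbc.symm, hcd.symm, hda.symm, h,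
      G.adj_comm c a, G.adj_comm d b] <;> decide

lemma DistHereditary.three_le_dist (hD : DistHereditary G) (hab : G.Adj a b) (hbc : G.Adj b c)
    (hcd : G.Adj c d) (hac : ¬ G.Adj a c) (hbd : ¬ G.Adj b d) (had : ¬ G.Adj a d)
    (hne : a ≠ d) :
    3 ≤ G.dist a d := by
  let p : G.Walk a d := .cons hab (.cons hbc (.cons hcd .nil))
  let a' : {x | x ∈ p.support} := ⟨a, p.start_mem_support⟩
  let d' : {x | x ∈ p.support} := ⟨d, p.end_mem_support⟩
  have hconn := p.connected_induce_support
  have hdist : _ = G.dist a d := hD _ hconn a' d'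
  have h₁ : 1 < (G.induce _).dist a' d' :=
    (hconn a' d').one_lt_dist_of_ne_of_not_adj (by simpa [a', d'] using hne) had
  by_contra! h₃
  obtain ⟨⟨m, hm⟩, ham, hmd⟩ :=
    exists_adj_adj_of_dist_eq_two (G := G.induce _) (a := a') (b := d') (by omega)
  have hm' : m = a ∨ m = b ∨ m = c ∨ m = d := by simpa [p] using hm
  rw [induce_adj] at ham hmd
  rcases hm' with rfl | rfl | rfl | rfl
  exacts [G.irrefl ham, hbd hmd, hac ham, G.irrefl hmd]

namespace Ptolemaic

lemma exists_common_neighbor (hP : Ptolemaic G) (hpre : (G.induce {u | u ≠ v}).Preconnected)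
    (ha : G.Adj v a) (hb : G.Adj v b) (hab : a ≠ b) (hnab : ¬ G.Adj a b) :
    ∃ m, G.Adj v m ∧ G.Adj a m ∧ G.Adj m b := by
  let a' : {u | u ≠ v} := ⟨a, ha.ne'⟩
  let b' : {u | u ≠ v} := ⟨b, hb.ne'⟩
  have hconn : (G.induce {u | u ≠ v}).Connected := { preconnected := hpre, nonempty := ⟨a'⟩ }
  have h₁ : 1 < (G.induce _).dist a' b' :=
    (hpre a' b').one_lt_dist_of_ne_of_not_adj (by simpa [a', b'] using hab) hnab
  have h₂ : (G.induce _).dist a' b' ≤ 2 :=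
    (hP.2 _ hconn a' b').trans_le (dist_le_two_of_adj_adj ha.symm hb)
  obtain ⟨⟨m, hmv⟩, ham, hmb⟩ :=
    exists_adj_adj_of_dist_eq_two (G := G.induce _) (a := a') (b := b') (by omega)
  rw [induce_adj] at ham hmb
  refine ⟨m, ?_, ham, hmb⟩
  exact (hP.1.adj_or_adj ha ham hmb hb.symm (Ne.symm hmv) hab).resolve_right hnab

lemma exists_adj_forall_adj [Finite V] (hP : Ptolemaic G)
    (hpre : (G.induce {u | u ≠ v}).Preconnected) (hw : G.Adj v w) :
    ∃ u, G.Adj v u ∧ ∀ x, G.Adj v x → x = u ∨ G.Adj u x := by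
  let N : V → Set V := fun u => {x | G.Adj v x ∧ (x = u ∨ G.Adj u x)}
  obtain ⟨u, hvu, hmax⟩ :=
    Set.Finite.exists_maximalFor N (G.neighborSet v) (Set.toFinite _) ⟨w, hw⟩
  refine ⟨u, hvu, fun x hvx => ?_⟩
  by_contra! hx
  obtain ⟨m, hvm, hum, hmx⟩ := hP.exists_common_neighbor hpre hvu hvx (Ne.symm hx.1) hx.2
  have hsub : N u ⊆ N m := by
    rintro y ⟨hvy, rfl | huy⟩
    · exact ⟨hvy, .inr hum.symm⟩
    refine ⟨hvy, ?_⟩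
    by_contra! hy
    -- else `u m x y` is an induced `C₄`, or `y u m x` an induced path with ends at distance 2
    by_cases hxy : G.Adj x y
    · exact (hP.1.adj_or_adj hum hmx hxy huy.symm (Ne.symm hx.1) (Ne.symm hy.1)).elim hx.2 hy.2
    · have := hP.2.three_le_dist huy.symm hum hmx (fun h => hy.2 h.symm) hx.2
        (fun h => hxy h.symm) (by rintro rfl; exact hx.2 huy)
      have := dist_le_two_of_adj_adj hvy.symm hvx
      omega
  exact ((hmax hvm hsub) ⟨hvx, .inr hmx⟩).2.elim hx.1 hx.2

lemma not_preconnected_induce_ne [Finite V] (hP : Ptolemaic G) (hv : v ∉ gBoundary G) :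
    ¬ (G.induce {u | u ≠ v}).Preconnected := by
  intro hpre
  apply hv
  by_cases hw : ∃ w, G.Adj v w
  · obtain ⟨w, hw⟩ := hw
    obtain ⟨u, hvu, hu⟩ := hP.exists_adj_forall_adj hpre hw
    refine ⟨u, fun x hvx => ?_⟩
    rw [dist_eq_one_iff_adj.mpr hvu.symm]
    rcases hu x hvx with rfl | hux
    · simp
    · exact (dist_eq_one_iff_adj.mpr hux).le
  · exact ⟨v, fun w hvw => (hw ⟨w, hvw⟩).elim⟩

end Ptolemaic

lemma exists_mem_gBoundary_reachable_induce_ne [Finite V] (a : {u | u ≠ v}) :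
    ∃ x : {u | u ≠ v}, x.1 ∈ gBoundary G ∧ (G.induce {u | u ≠ v}).Reachable x a := by
  obtain ⟨x, hxa, hmax⟩ := Set.exists_max_image {x | (G.induce {u | u ≠ v}).Reachable x a}
    (fun x => G.dist v x) (Set.toFinite _) ⟨a, .refl a⟩
  refine ⟨x, ⟨v, fun w hxw => ?_⟩, hxa⟩
  by_cases hwv : w = v
  · simp [hwv]
  · exact hmax ⟨w, hwv⟩ ((induce_adj.mpr hxw.symm).reachable.trans hxa)

lemma dist_eq_add_of_not_reachable_induce_ne (hG : G.Connected) (ha : a ≠ v) (hb : b ≠ v)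
    (h : ¬ (G.induce {u | u ≠ v}).Reachable ⟨a, ha⟩ ⟨b, hb⟩) :
    G.dist a b = G.dist a v + G.dist v b := by
  classical
  obtain ⟨p, hp⟩ := hG.exists_walk_length_eq_dist a b
  have hvp : v ∈ p.support := by
    by_contra hvp
    exact h ⟨p.induce {u | u ≠ v} fun w hw hwv => hvp (hwv ▸ hw)⟩
  have h₁ := G.dist_le (p.takeUntil v hvp)
  have h₂ := G.dist_le (p.dropUntil v hvp)
  have h₃ : (p.takeUntil v hvp).length + (p.dropUntil v hvp).length = p.length := by
    rw [← Walk.length_append, p.take_spec hvp]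
  have h₄ := hG.dist_triangle (u := a) (v := v) (w := b)
  omega

lemma exists_gBoundary_forall_dist_eq_add_of_not_preconnected [Finite V] (hG : G.Connected)
    (hv : ¬ (G.induce {u | u ≠ v}).Preconnected) :
    ∃ x ∈ gBoundary G, ∃ y ∈ gBoundary G, G.dist x y = G.dist x v + G.dist v y ∧
      ∀ u, G.dist u x = G.dist u v + G.dist v x ∨ G.dist u y = G.dist u v + G.dist v y := by
  obtain ⟨A, B, hAB⟩ : ∃ A B, ¬ (G.induce {u | u ≠ v}).Reachable A B := by
    simpa [Preconnected] using hv
  obtain ⟨⟨x, hxv⟩, hx, hxA⟩ := exists_mem_gBoundary_reachable_induce_ne A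
  obtain ⟨⟨y, hyv⟩, hy, hyB⟩ := exists_mem_gBoundary_reachable_induce_ne B
  refine ⟨x, hx, y, hy, dist_eq_add_of_not_reachable_induce_ne hG hxv hyv
    fun hxy => hAB (hxA.symm.trans (hxy.trans hyB)), fun u => ?_⟩
  by_cases huv : u = v
  · simp [huv]
  by_cases hux : (G.induce {u | u ≠ v}).Reachable ⟨u, huv⟩ ⟨x, hxv⟩
  · exact .inr (dist_eq_add_of_not_reachable_induce_ne hG huv hyv
      fun huy => hAB (hxA.symm.trans (hux.symm.trans (huy.trans hyB))))
  · exact .inl (dist_eq_add_of_not_reachable_induce_ne hG huv hxv hux)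

lemma dist_le_dist_of_dist_eq_add (hG' : G'.Connected) (h : G.dist u x = G.dist u v + G.dist v x)
    (hux : G'.dist u x = G.dist u x) (hwx : G'.dist w x = G.dist v x) :
    G.dist u v ≤ G'.dist u w := by
  have := hG'.dist_triangle (u := u) (v := w) (w := x)
  omega

lemma dist_le_dist_of_forall_gBoundary [Finite V] (hG : G.Connected) (hG' : G'.Connected)
    {u₁ u₂ w₁ w₂ : V} (h₁ : ∀ b ∈ gBoundary G, G'.dist w₁ b = G.dist u₁ b)
    (h₂ : ∀ b ∈ gBoundary G, G'.dist w₂ b = G.dist u₂ b) :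
    G.dist u₁ u₂ ≤ G'.dist w₁ w₂ := by
  obtain ⟨b, hb, hu⟩ := exists_mem_gBoundary_dist_eq_add hG u₁ u₂
  have := hG'.dist_triangle (u := w₁) (v := w₂) (w := b)
  have := h₁ b hb
  have := h₂ b hb
  omega

lemma forall_gBoundary_dist_eq_of_le [Finite V] (hG : G.Connected) (hG' : G'.Connected)
    (hB : gBoundary G' ⊆ gBoundary G)
    (hd : ∀ x ∈ gBoundary G, ∀ y ∈ gBoundary G, G'.dist x y = G.dist x y)
    (hle : ∀ b ∈ gBoundary G, G.dist v b ≤ G'.dist w b) :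
    ∀ b ∈ gBoundary G, G'.dist w b = G.dist v b := by
  intro b hb
  obtain ⟨c, hc, hbc⟩ := exists_mem_gBoundary_dist_eq_add hG' b w
  have := hd b hb c (hB hc)
  have := hG.dist_triangle (u := b) (v := v) (w := c)
  have := hle b hb
  have := hle c (hB hc)
  have := G.dist_comm (u := b) (v := v)
  have := G'.dist_comm (u := b) (v := w)
  omega

lemma Ptolemaic.exists_forall_gBoundary_dist_eq [Finite V] (hG : G.Connected) (hP : Ptolemaic G)
    (hG' : G'.Connected) (hB : gBoundary G' ⊆ gBoundary G)
    (hd : ∀ x ∈ gBoundary G, ∀ y ∈ gBoundary G, G'.dist x y = G.dist x y) (v : V) :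
    ∃ w, ∀ b ∈ gBoundary G, G'.dist w b = G.dist v b := by
  by_cases hv : v ∈ gBoundary G
  · exact ⟨v, hd v hv⟩
  obtain ⟨x, hx, y, hy, hxy, hthrough⟩ :=
    exists_gBoundary_forall_dist_eq_add_of_not_preconnected hG (hP.not_preconnected_induce_ne hv)
  obtain ⟨w, hxw, hwy⟩ :=
    hG'.exists_dist_eq_of_le_dist (j := G.dist x v) (by rw [hd x hx y hy]; omega)
  refine ⟨w, forall_gBoundary_dist_eq_of_le hG hG' hB hd fun u hu => ?_⟩
  rw [G.dist_comm, G'.dist_comm]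
  rcases hthrough u with h | h
  · exact dist_le_dist_of_dist_eq_add hG' h (hd u hu x hx)
      (by rw [G'.dist_comm, hxw, G.dist_comm])
  · exact dist_le_dist_of_dist_eq_add hG' h (hd u hu y hy) (by rw [hwy, hd x hx y hy]; omega)

end

theorem ptolemaic_isBDM {V : Type*} [Fintype V] (G : SimpleGraph V)
    (hG : G.Connected) (hP : Ptolemaic G) : IsBDM G := by
  intro G' hG' hB hd
  choose ψ hψ using hP.exists_forall_gBoundary_dist_eq hG hG' hB.le hd
  have hψ' : ∀ v, ∀ b ∈ gBoundary G', G.dist v b = G'.dist (ψ v) b :=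
    fun v b hb => (hψ v b (hB ▸ hb)).symm
  have hdist : ∀ v₁ v₂, G'.dist (ψ v₁) (ψ v₂) = G.dist v₁ v₂ := fun v₁ v₂ =>
    le_antisymm (dist_le_dist_of_forall_gBoundary hG' hG (hψ' v₁) (hψ' v₂))
      (dist_le_dist_of_forall_gBoundary hG hG' (hψ v₁) (hψ v₂))
  have hinj : ψ.Injective := fun v₁ v₂ h =>
    hG.dist_eq_zero_iff.mp (by rw [← hdist, h, dist_self])
  exact ⟨⟨.ofBijective ψ hinj.bijective_of_finite,
    by simp [← dist_eq_one_iff_adj, hdist]⟩⟩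
end

section
/- Not every connected graph is a BDM graph: there exist two non-isomorphic connected simple graphs G₁ and G₂ on the same vertex set of cardinality 7, both of diameter 3, such that ∂(G₁) = ∂(G₂), |∂(G₁)| = 6, and d_{G₁}(x,y) = d_{G₂}(x,y) for all x, y ∈ ∂(G₁). -/
open SimpleGraph

/-!
Let `G₁` have the edges `04 05 06 13 15 16 23 24 26 36`, and let `G₂` be obtained from it by
replacing the edge `16` with `46`. In both graphs every vertex except the hub `6` is a boundary
vertex, and the swap changes no distance except `d(1,6)` and `d(4,6)`, so the boundary distances
agree. Yet `G₁` has two triangles and `G₂` has three. All distances are certified by explicit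
matrices `D` that decrease by one along some edge towards each target and are `1`-Lipschitz
along every edge.
-/

open Finset

namespace SimpleGraph

variable {V : Type*} {G : SimpleGraph V} {D : V → V → ℕ}

theorem exists_walk_length_eq_of_descent (hzero : ∀ u v, D u v = 0 → u = v)
    (hdesc : ∀ u v, D u v ≠ 0 → ∃ w, G.Adj u w ∧ D w v + 1 = D u v) (u v : V) :
    ∃ p : G.Walk u v, p.length = D u v := by
  induction hn : D u v generalizing u with
  | zero =>
    obtain rfl := hzero u v hn
    exact ⟨Walk.nil, rfl⟩
  | succ n ih =>
    obtain ⟨w, hadj, hw⟩ := hdesc u v (by omega)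
    obtain ⟨p, hp⟩ := ih w (by omega)
    exact ⟨Walk.cons hadj p, by simp [hp]⟩

theorem le_length_of_lipschitz (hdiag : ∀ v, D v v = 0)
    (hlip : ∀ u w, G.Adj u w → ∀ v, D u v ≤ D w v + 1) {u v : V} (p : G.Walk u v) :
    D u v ≤ p.length := by
  induction p with
  | nil => simp [hdiag]
  | @cons u w v hadj p ih =>
    rw [Walk.length_cons]
    exact (hlip u w hadj v).trans (by omega)

theorem connected_of_descent [Nonempty V] (hzero : ∀ u v, D u v = 0 → u = v)
    (hdesc : ∀ u v, D u v ≠ 0 → ∃ w, G.Adj u w ∧ D w v + 1 = D u v) : G.Connected :=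
  .mk fun u v => ⟨(exists_walk_length_eq_of_descent hzero hdesc u v).choose⟩

theorem dist_eq_of_descent_of_lipschitz (hdiag : ∀ v, D v v = 0)
    (hzero : ∀ u v, D u v = 0 → u = v)
    (hdesc : ∀ u v, D u v ≠ 0 → ∃ w, G.Adj u w ∧ D w v + 1 = D u v)
    (hlip : ∀ u w, G.Adj u w → ∀ v, D u v ≤ D w v + 1) (u v : V) :
    G.dist u v = D u v := by
  obtain ⟨p, hp⟩ := exists_walk_length_eq_of_descent hzero hdesc u v
  obtain ⟨q, hq⟩ := Reachable.exists_walk_length_eq_dist ⟨p⟩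
  exact le_antisymm (hp ▸ dist_le p) (hq ▸ le_length_of_lipschitz hdiag hlip q)

variable {W : Type*} {H : SimpleGraph W}

theorem Iso.isNClique_map_iff (e : G ≃g H) {n : ℕ} {s : Finset V} :
    H.IsNClique n (s.map e.toEquiv.toEmbedding) ↔ G.IsNClique n s := by
  simp [isNClique_iff, isClique_iff, Set.Pairwise, e.map_adj_iff]

theorem Iso.card_cliqueFinset_eq [Fintype V] [Fintype W] [DecidableEq V] [DecidableEq W]
    [DecidableRel G.Adj] [DecidableRel H.Adj] (e : G ≃g H) (n : ℕ) :
    #(G.cliqueFinset n) = #(H.cliqueFinset n) :=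
  card_equiv e.toEquiv.finsetCongr fun s => by
    simp [Equiv.finsetCongr_apply, e.isNClique_map_iff]

end SimpleGraph

namespace NonBDMPair

def G₁ : SimpleGraph (Fin 7) := fromEdgeSet
  {s(0,4), s(0,5), s(0,6), s(1,3), s(1,5), s(1,6), s(2,3), s(2,4), s(2,6), s(3,6)}

def G₂ : SimpleGraph (Fin 7) := fromEdgeSet
  {s(0,4), s(0,5), s(0,6), s(1,3), s(1,5), s(2,3), s(2,4), s(2,6), s(3,6), s(4,6)}

instance : DecidableRel G₁.Adj := fun u v => inferInstanceAs (Decidable ((fromEdgeSet _).Adj u v))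

instance : DecidableRel G₂.Adj := fun u v => inferInstanceAs (Decidable ((fromEdgeSet _).Adj u v))

def D₁ : Fin 7 → Fin 7 → ℕ :=
  !![0, 2, 2, 2, 1, 1, 1;
     2, 0, 2, 1, 3, 1, 1;
     2, 2, 0, 1, 1, 3, 1;
     2, 1, 1, 0, 2, 2, 1;
     1, 3, 1, 2, 0, 2, 2;
     1, 1, 3, 2, 2, 0, 2;
     1, 1, 1, 1, 2, 2, 0]

def D₂ : Fin 7 → Fin 7 → ℕ :=
  !![0, 2, 2, 2, 1, 1, 1;
     2, 0, 2, 1, 3, 1, 2;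
     2, 2, 0, 1, 1, 3, 1;
     2, 1, 1, 0, 2, 2, 1;
     1, 3, 1, 2, 0, 2, 1;
     1, 1, 3, 2, 2, 0, 2;
     1, 2, 1, 1, 1, 2, 0]

theorem connected_G₁ : G₁.Connected := connected_of_descent (D := D₁) (by decide) (by decide)

theorem connected_G₂ : G₂.Connected := connected_of_descent (D := D₂) (by decide) (by decide)

theorem dist_G₁ (u v : Fin 7) : G₁.dist u v = D₁ u v :=
  dist_eq_of_descent_of_lipschitz (by decide) (by decide) (by decide) (by decide) u v

theorem dist_G₂ (u v : Fin 7) : G₂.dist u v = D₂ u v :=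
  dist_eq_of_descent_of_lipschitz (by decide) (by decide) (by decide) (by decide) u v

theorem gBoundary_G₁ : gBoundary G₁ = {6}ᶜ := by
  ext v
  simp only [gBoundary, Set.mem_ofPred_eq, Set.mem_compl_singleton_iff, dist_G₁]
  revert v
  decide

theorem gBoundary_G₂ : gBoundary G₂ = {6}ᶜ := by
  ext v
  simp only [gBoundary, Set.mem_ofPred_eq, Set.mem_compl_singleton_iff, dist_G₂]
  revert v
  decide

theorem gDiam_G₁ : gDiam G₁ = 3 := by
  simp only [gDiam, gEcc, dist_G₁]
  decide

theorem gDiam_G₂ : gDiam G₂ = 3 := by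
  simp only [gDiam, gEcc, dist_G₂]
  decide

theorem dist_G₁_eq_dist_G₂ {x y : Fin 7} (hx : x ≠ 6) (hy : y ≠ 6) :
    G₁.dist x y = G₂.dist x y := by
  rw [dist_G₁, dist_G₂]
  revert x y
  decide

theorem not_nonempty_iso_G₁_G₂ : ¬ Nonempty (G₁ ≃g G₂) := fun ⟨e⟩ =>
  absurd (e.card_cliqueFinset_eq 3) (by decide)

end NonBDMPair

open NonBDMPair in
theorem exists_non_bdm_pair_order_seven :
    ∃ G₁ G₂ : SimpleGraph (Fin 7), G₁.Connected ∧ G₂.Connected ∧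
      ¬ Nonempty (G₁ ≃g G₂) ∧ gDiam G₁ = 3 ∧ gDiam G₂ = 3 ∧
      gBoundary G₁ = gBoundary G₂ ∧ (gBoundary G₁).ncard = 6 ∧
      ∀ x ∈ gBoundary G₁, ∀ y ∈ gBoundary G₁, G₁.dist x y = G₂.dist x y := by
  refine ⟨G₁, G₂, connected_G₁, connected_G₂, not_nonempty_iso_G₁_G₂, gDiam_G₁, gDiam_G₂,
    gBoundary_G₁.trans gBoundary_G₂.symm, ?_, fun x hx y hy => ?_⟩
  · rw [gBoundary_G₁, Set.ncard_compl, Set.ncard_singleton, Nat.card_eq_fintype_card,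
      Fintype.card_fin]
  · rw [gBoundary_G₁] at hx hy
    exact dist_G₁_eq_dist_G₂ hx hy
end

section
/- There exist two non-isomorphic connected bipartite simple graphs G₁ and G₂ on the same vertex set of cardinality 8, both of diameter 3, such that ∂(G₁) = ∂(G₂), |∂(G₁)| = 7, and d_{G₁}(x,y) = d_{G₂}(x,y) for all x, y ∈ ∂(G₁). Hence not every connected bipartite graph is a BDM graph. -/
open SimpleGraph

-- master link predicate
def link3 {V : Type*} (G : SimpleGraph V) (u v : V) : Prop :=
  u = v ∨ G.Adj u v ∨ (∃ w, G.Adj u w ∧ G.Adj w v) ∨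
    (∃ w x, G.Adj u w ∧ G.Adj w x ∧ G.Adj x v)

instance {V : Type*} [Fintype V] [DecidableEq V] (G : SimpleGraph V) [DecidableRel G.Adj]
    (u v : V) : Decidable (link3 G u v) := by unfold link3; infer_instance

def d3 {V : Type*} [Fintype V] [DecidableEq V] (G : SimpleGraph V) [DecidableRel G.Adj]
    (u v : V) : ℕ :=
  if u = v then 0 else if G.Adj u v then 1 else
    if ∃ w, G.Adj u w ∧ G.Adj w v then 2 else 3

theorem connected_of_link3 {V : Type*} [Fintype V] [DecidableEq V] [Nonempty V]
    (G : SimpleGraph V) [DecidableRel G.Adj] (H : ∀ u v, link3 G u v) : G.Connected := by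
  refine ⟨fun u v => ?_⟩
  rcases H u v with h | h | ⟨w, h1, h2⟩ | ⟨w, x, h1, h2, h3⟩
  · exact h ▸ Reachable.refl u
  · exact h.reachable
  · exact (h1.reachable).trans h2.reachable
  · exact ((h1.reachable).trans h2.reachable).trans h3.reachable

theorem dist_eq_d3 {V : Type*} [Fintype V] [DecidableEq V] [Nonempty V]
    (G : SimpleGraph V) [DecidableRel G.Adj] (H : ∀ u v, link3 G u v) :
    ∀ u v, G.dist u v = d3 G u v := by
  intro u v
  have hconn := connected_of_link3 G H
  refine le_antisymm ?_ ?_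
  · unfold d3
    split_ifs with h0 h1 h2
    · simp [h0]
    · simpa using SimpleGraph.dist_le (Walk.cons h1 Walk.nil)
    · obtain ⟨w, hw1, hw2⟩ := h2
      simpa using SimpleGraph.dist_le (Walk.cons hw1 (Walk.cons hw2 Walk.nil))
    · rcases H u v with h | h | h | ⟨w, x, h1', h2', h3'⟩
      · exact absurd h h0
      · exact absurd h h1
      · exact absurd h h2
      · simpa using SimpleGraph.dist_le (Walk.cons h1' (Walk.cons h2' (Walk.cons h3' Walk.nil)))
  · obtain ⟨p, hp⟩ := hconn.exists_walk_length_eq_dist u v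
    rw [← hp]
    have hle3 : d3 G u v ≤ 3 := by unfold d3; split_ifs <;> omega
    rcases p with _ | ⟨h1, _ | ⟨h2, _ | ⟨h3, q⟩⟩⟩
    · simp [d3]
    · simp only [Walk.length_cons, Walk.length_nil]
      unfold d3; split_ifs <;> omega
    · simp only [Walk.length_cons, Walk.length_nil]
      unfold d3; split_ifs with a b c
      · omega
      · omega
      · omega
      · exact (c ⟨_, h1, h2⟩).elim
    · simp only [Walk.length_cons]
      omega

-- The two graphs
def el1 : List (ℕ × ℕ) :=
  [(0,2),(0,3),(0,4),(0,7),(1,5),(1,6),(2,5),(3,6),(4,5),(4,6),(5,7)]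
def el2 : List (ℕ × ℕ) :=
  [(0,2),(0,3),(0,7),(1,4),(1,5),(1,6),(2,4),(2,5),(3,4),(3,6),(4,7),(5,7)]

def Gr1 : SimpleGraph (Fin 8) := SimpleGraph.fromRel (fun a b => (a.val, b.val) ∈ el1)
def Gr2 : SimpleGraph (Fin 8) := SimpleGraph.fromRel (fun a b => (a.val, b.val) ∈ el2)

instance : DecidableRel Gr1.Adj := fun a b =>
  decidable_of_iff (a ≠ b ∧ ((a.val, b.val) ∈ el1 ∨ (b.val, a.val) ∈ el1)) Iff.rfl
instance : DecidableRel Gr2.Adj := fun a b =>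
  decidable_of_iff (a ≠ b ∧ ((a.val, b.val) ∈ el2 ∨ (b.val, a.val) ∈ el2)) Iff.rfl

theorem H1 : ∀ u v, link3 Gr1 u v := by decide
theorem H2 : ∀ u v, link3 Gr2 u v := by decide

theorem hd1 : ∀ u v, Gr1.dist u v = d3 Gr1 u v := dist_eq_d3 Gr1 H1
theorem hd2 : ∀ u v, Gr2.dist u v = d3 Gr2 u v := dist_eq_d3 Gr2 H2

def bdF : Finset (Fin 8) := {0,1,2,3,5,6,7}

theorem hb1 : gBoundary Gr1 = ↑bdF := by
  ext v
  simp only [gBoundary, Set.mem_setOf_eq, hd1, Finset.coe_insert, Set.mem_insert_iff,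
    Finset.coe_singleton, Set.mem_singleton_iff, bdF]
  revert v
  decide

theorem hb2 : gBoundary Gr2 = ↑bdF := by
  ext v
  simp only [gBoundary, Set.mem_setOf_eq, hd2, Finset.coe_insert, Set.mem_insert_iff,
    Finset.coe_singleton, Set.mem_singleton_iff, bdF]
  revert v
  decide

theorem exists_non_bdm_bipartite_pair_order_eight :
    ∃ G₁ G₂ : SimpleGraph (Fin 8), G₁.Connected ∧ G₂.Connected ∧
      IsBipartiteGraph G₁ ∧ IsBipartiteGraph G₂ ∧
      ¬ Nonempty (G₁ ≃g G₂) ∧ gDiam G₁ = 3 ∧ gDiam G₂ = 3 ∧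
      gBoundary G₁ = gBoundary G₂ ∧ (gBoundary G₁).ncard = 7 ∧
      ∀ x ∈ gBoundary G₁, ∀ y ∈ gBoundary G₁, G₁.dist x y = G₂.dist x y := by
  refine ⟨Gr1, Gr2, connected_of_link3 Gr1 H1, connected_of_link3 Gr2 H2, ?_, ?_, ?_, ?_, ?_, ?_, ?_, ?_⟩
  · exact ⟨↑({0,5,6} : Finset (Fin 8)), by
      intro a b hab
      revert hab
      revert a b
      decide⟩
  · exact ⟨↑({0,4,5,6} : Finset (Fin 8)), by
      intro a b hab
      revert hab
      revert a b
      decide⟩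
  · rintro ⟨e⟩
    have hc := e.card_edgeFinset_eq
    have h1 : ∑ v, Gr1.degree v = 2 * Gr1.edgeFinset.card :=
      Gr1.sum_degrees_eq_twice_card_edges
    have h2 : ∑ v, Gr2.degree v = 2 * Gr2.edgeFinset.card :=
      Gr2.sum_degrees_eq_twice_card_edges
    have s1 : ∑ v, Gr1.degree v = 22 := by decide
    have s2 : ∑ v, Gr2.degree v = 24 := by decide
    omega
  · unfold gDiam gEcc
    have : ∀ v : Fin 8, (Finset.univ.sup fun w => Gr1.dist v w)
        = Finset.univ.sup fun w => d3 Gr1 v w := by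
      intro v; congr 1; funext w; exact hd1 v w
    simp only [this]
    decide
  · unfold gDiam gEcc
    have : ∀ v : Fin 8, (Finset.univ.sup fun w => Gr2.dist v w)
        = Finset.univ.sup fun w => d3 Gr2 v w := by
      intro v; congr 1; funext w; exact hd2 v w
    simp only [this]
    decide
  · rw [hb1, hb2]
  · rw [hb1, Set.ncard_coe_finset]; decide
  · rw [hb1]
    intro x hx y hy
    rw [hd1, hd2]
    revert hy
    revert hx
    revert x y
    simp only [Finset.mem_coe]
    decide
end

section
/- Prefixing the order and the boundary number alone does not determine a graph from boundary distances: there exist two non-isomorphic connected simple graphs G₁ and G₂ on the same vertex set of cardinality 6, both with boundary number κ(G₁) = κ(G₂) = 5, and a 5-element vertex subset S such that S = ∂(G₁), S ≠ ∂(G₂), and d_{G₁}(x,y) = d_{G₂}(x,y) for all x, y ∈ S. -/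
open SimpleGraph

/-!
Take `K_{2,3}` on the vertices `1, …, 5` (parts `{1, 2}` and `{3, 4, 5}`) and add a sixth vertex
`0`: joined to every vertex this gives `G₁`, joined only to `1` it gives `G₂`. In both graphs two
vertices of `K_{2,3}` are at distance 1 across the parts and 2 within a part. The universal vertex
`0` of `G₁` is not a boundary vertex, so `∂(G₁) = {1, …, 5}`; in `G₂` the pendant vertex `0` is a
boundary vertex while its neighbour `1` is not, so `∂(G₂) = {0, 2, 3, 4, 5}`. The graphs have 11
and 7 edges. All distances are certified by explicit tables.
-/

instance SimpleGraph.fromRel.decidableRel {V : Type*} [DecidableEq V] (r : V → V → Prop)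
    [DecidableRel r] : DecidableRel (fromRel r).Adj :=
  fun v w => decidable_of_iff _ (fromRel_adj r v w).symm

section DistanceCertificate

variable {V : Type*} {G : SimpleGraph V} {D : V → V → ℕ}

theorem le_length_of_le_add_one_of_adj (h0 : ∀ u, D u u = 0)
    (hstep : ∀ u w v, G.Adj u w → D u v ≤ D w v + 1) {u v : V} (p : G.Walk u v) :
    D u v ≤ p.length := by
  induction p with
  | nil => simp [h0]
  | cons hadj q ih =>
    rw [Walk.length_cons]
    exact (hstep _ _ _ hadj).trans (Nat.add_le_add_right ih 1)

theorem exists_walk_length_le_of_descent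
    (hdesc : ∀ u v, u ≠ v → ∃ w, G.Adj u w ∧ D w v + 1 = D u v) (u v : V) :
    ∃ p : G.Walk u v, p.length ≤ D u v := by
  obtain rfl | huv := eq_or_ne u v
  · exact ⟨.nil, Nat.zero_le _⟩
  obtain ⟨w, hadj, hw⟩ := hdesc u v huv
  obtain ⟨p, hp⟩ := exists_walk_length_le_of_descent hdesc w v
  exact ⟨.cons hadj p, by rw [Walk.length_cons]; omega⟩
termination_by D u v

theorem connected_of_descent [Nonempty V]
    (hdesc : ∀ u v, u ≠ v → ∃ w, G.Adj u w ∧ D w v + 1 = D u v) : G.Connected :=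
  (connected_iff G).2
    ⟨fun u v => ⟨(exists_walk_length_le_of_descent hdesc u v).choose⟩, inferInstance⟩

theorem dist_eq_of_descent (h0 : ∀ u, D u u = 0)
    (hstep : ∀ u w v, G.Adj u w → D u v ≤ D w v + 1)
    (hdesc : ∀ u v, u ≠ v → ∃ w, G.Adj u w ∧ D w v + 1 = D u v) (u v : V) :
    G.dist u v = D u v := by
  obtain ⟨p, hp⟩ := exists_walk_length_le_of_descent hdesc u v
  obtain ⟨q, hq⟩ := p.reachable.exists_walk_length_eq_dist
  exact le_antisymm ((dist_le p).trans hp) (hq ▸ le_length_of_le_add_one_of_adj h0 hstep q)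

theorem gBoundary_eq_of_dist_eq (hD : ∀ u v, G.dist u v = D u v) :
    gBoundary G = {v | ∃ u, ∀ w, G.Adj v w → D u w ≤ D u v} := by
  simp only [gBoundary, hD]

end DistanceCertificate

abbrev coneK23 : SimpleGraph (Fin 6) :=
  fromRel fun a b => (a = 1 ∨ a = 2) ∧ 3 ≤ b ∨ a = 0

abbrev pendantK23 : SimpleGraph (Fin 6) :=
  fromRel fun a b => (a = 1 ∨ a = 2) ∧ 3 ≤ b ∨ a = 0 ∧ b = 1

def coneK23Dist : Fin 6 → Fin 6 → ℕ :=
  ![![0, 1, 1, 1, 1, 1], ![1, 0, 2, 1, 1, 1], ![1, 2, 0, 1, 1, 1],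
    ![1, 1, 1, 0, 2, 2], ![1, 1, 1, 2, 0, 2], ![1, 1, 1, 2, 2, 0]]

def pendantK23Dist : Fin 6 → Fin 6 → ℕ :=
  ![![0, 1, 3, 2, 2, 2], ![1, 0, 2, 1, 1, 1], ![3, 2, 0, 1, 1, 1],
    ![2, 1, 1, 0, 2, 2], ![2, 1, 1, 2, 0, 2], ![2, 1, 1, 2, 2, 0]]

theorem connected_coneK23 : coneK23.Connected :=
  connected_of_descent (D := coneK23Dist) (by decide)

theorem connected_pendantK23 : pendantK23.Connected :=
  connected_of_descent (D := pendantK23Dist) (by decide)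

theorem dist_coneK23 (u v : Fin 6) : coneK23.dist u v = coneK23Dist u v :=
  dist_eq_of_descent (by decide) (by decide) (by decide) u v

theorem dist_pendantK23 (u v : Fin 6) : pendantK23.dist u v = pendantK23Dist u v :=
  dist_eq_of_descent (by decide) (by decide) (by decide) u v

theorem gBoundary_coneK23 : gBoundary coneK23 = {0}ᶜ := by
  rw [gBoundary_eq_of_dist_eq dist_coneK23]
  exact Set.ext (by decide)

theorem gBoundary_pendantK23 : gBoundary pendantK23 = {1}ᶜ := by
  rw [gBoundary_eq_of_dist_eq dist_pendantK23]
  exact Set.ext (by decide)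

theorem not_nonempty_iso_coneK23_pendantK23 : ¬ Nonempty (coneK23 ≃g pendantK23) :=
  fun ⟨e⟩ => absurd e.card_edgeFinset_eq (by decide)

theorem ncard_compl_singleton_fin_six (a : Fin 6) : ({a}ᶜ : Set (Fin 6)).ncard = 5 := by
  rw [Set.ncard_compl, Set.ncard_singleton, Nat.card_eq_fintype_card, Fintype.card_fin]

theorem order_and_boundary_number_not_sufficient :
    ∃ G₁ G₂ : SimpleGraph (Fin 6), G₁.Connected ∧ G₂.Connected ∧
      ¬ Nonempty (G₁ ≃g G₂) ∧
      (gBoundary G₁).ncard = 5 ∧ (gBoundary G₂).ncard = 5 ∧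
      ∃ S : Set (Fin 6), S.ncard = 5 ∧ S = gBoundary G₁ ∧ S ≠ gBoundary G₂ ∧
        ∀ x ∈ S, ∀ y ∈ S, G₁.dist x y = G₂.dist x y := by
  refine ⟨coneK23, pendantK23, connected_coneK23, connected_pendantK23,
    not_nonempty_iso_coneK23_pendantK23, ?_, ?_, {0}ᶜ, ncard_compl_singleton_fin_six 0,
    gBoundary_coneK23.symm, ?_, ?_⟩
  · rw [gBoundary_coneK23]; exact ncard_compl_singleton_fin_six 0
  · rw [gBoundary_pendantK23]; exact ncard_compl_singleton_fin_six 1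
  · rw [gBoundary_pendantK23]; exact compl_injective.ne (by simp)
  · simp only [dist_coneK23, dist_pendantK23]
    decide
end
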